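/- arXiv:2310.01614 — 2 statements merged into one kernel-verified Lean document; each statement's English description precedes it below -/
import Mathlib

section
/- Let N players have nonempty compact feasible strategy sets S_1, …, S_N in topological spaces U_1, …, U_N, and cost functions J_i satisfying the potential decomposition J_i(u) = p(u) + c_i(u_{-i}) for all profiles u, where p is continuous on the product space and each c_i depends only on the strategies of players other than i. Then the game admits a Nash equilibrium: there exists a feasible profile u* such that for every player i and every u_i ∈ S_i, J_i(u*) ≤ J_i(u* with coordinate i replaced by u_i). -/
/-- Existence of Nash equilibria in a potential game with nonempty compact feasible
sets and a continuous potential. -/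
theorem exists_nash_of_compact_potential
    {N : ℕ} {U : Fin N → Type*} [∀ i, TopologicalSpace (U i)]
    (S : ∀ i, Set (U i))
    (hSne : ∀ i, (S i).Nonempty)
    (hScpt : ∀ i, IsCompact (S i))
    (J : Fin N → (∀ i, U i) → ℝ)
    (p : (∀ i, U i) → ℝ)
    (hp : Continuous p)
    (c : Fin N → (∀ i, U i) → ℝ)
    (hc : ∀ (i : Fin N) (u v : ∀ j, U j), (∀ j, j ≠ i → u j = v j) → c i u = c i v)
    (hJ : ∀ (i : Fin N) (u : ∀ j, U j), J i u = p u + c i u) :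
    ∃ ustar : ∀ i, U i, (∀ i, ustar i ∈ S i) ∧
      ∀ (i : Fin N), ∀ ui ∈ S i, J i ustar ≤ J i (Function.update ustar i ui) := by
  have hcpt : IsCompact (Set.univ.pi S) := isCompact_univ_pi hScpt
  have hne : (Set.univ.pi S).Nonempty := by
    refine ⟨fun i => (hSne i).choose, fun i _ => (hSne i).choose_spec⟩
  obtain ⟨u, hu, hmin⟩ := hcpt.exists_isMinOn hne hp.continuousOn
  refine ⟨u, fun i => hu i (Set.mem_univ i), fun i ui hui => ?_⟩
  have hmem : Function.update u i ui ∈ Set.univ.pi S := by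
    intro j _
    rcases eq_or_ne j i with rfl | h
    · simp [hui]
    · simp [Function.update_of_ne h, hu j (Set.mem_univ j)]
  have hpc : p u ≤ p (Function.update u i ui) := hmin hmem
  have hcc : c i u = c i (Function.update u i ui) := by
    apply hc
    intro j hj
    simp [Function.update_of_ne hj]
  rw [hJ, hJ, ← hcc]
  linarith
end

section
/- Consider N agents, each with its own discrete-time dynamics x_i(k+1) = f_i(x_i(k), u_i(k)) on state space X_i with control space V_i, fixed initial states x_i(0), and horizon T. For a control sequence u_i : Fin T → V_i, let φ_i(u_i) : Fin (T+1) → X_i denote the unique trajectory of agent i determined by recursion from x_i(0). Suppose the per-agent running costs have the structure L_i(x(k), u(k)) = p(x(k), u(k)) + c_i(x_{-i}(k), u_{-i}(k)) and the terminal costs have the structure S_i(x(T)) = s̄(x(T)) + s_i(x_{-i}(T)), where c_i and s_i do not depend on agent i's state or control. Define each agent's total cost on control profiles U = (u_1, …, u_N) by J_i(U) = S_i(φ(U)(T)) + ∑_{k=0}^{T−1} L_i(φ(U)(k), U(k)), where φ(U) is the joint trajectory. If U* is a control profile, feasible for per-agent control constraint sets, that minimizes ∑_{k=0}^{T−1}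 p(φ(U)(k), U(k)) + s̄(φ(U)(T)) over all feasible control profiles, then U* is an open-loop Nash equilibrium: for every agent i and every feasible control sequence u_i, J_i(U*) ≤ J_i(U* with agent i's controls replaced by u_i). -/
open Finset

/-- Theorem 1 of the paper in discrete time: with decoupled per-agent dynamics and
potential-structured running and terminal costs, any feasible control profile that
minimizes the potential trajectory cost is an open-loop Nash equilibrium. -/
theorem openLoop_nash_of_potential_trajectory_minimizer
    {N T : ℕ} {X V : Fin N → Type*}
    (f : ∀ i, X i → V i → X i)
    (x0 : ∀ i, X i)
    (φ : ∀ i, (Fin T → V i) → (Fin (T + 1) → X i))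
    (hφ0 : ∀ (i : Fin N) (u : Fin T → V i), φ i u 0 = x0 i)
    (hφsucc : ∀ (i : Fin N) (u : Fin T → V i) (k : Fin T),
      φ i u k.succ = f i (φ i u k.castSucc) (u k))
    (L : Fin N → (∀ j, X j) → (∀ j, V j) → ℝ)
    (p : (∀ j, X j) → (∀ j, V j) → ℝ)
    (c : Fin N → (∀ j, X j) → (∀ j, V j) → ℝ)
    (hc : ∀ (i : Fin N) (x x' : ∀ j, X j) (u u' : ∀ j, V j),
      (∀ j, j ≠ i → x j = x' j) → (∀ j, j ≠ i → u j = u' j) → c i x u = c i x' u')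
    (hL : ∀ (i : Fin N) (x : ∀ j, X j) (u : ∀ j, V j), L i x u = p x u + c i x u)
    (Sterm : Fin N → (∀ j, X j) → ℝ)
    (sbar : (∀ j, X j) → ℝ)
    (s : Fin N → (∀ j, X j) → ℝ)
    (hs : ∀ (i : Fin N) (x x' : ∀ j, X j),
      (∀ j, j ≠ i → x j = x' j) → s i x = s i x')
    (hS : ∀ (i : Fin N) (x : ∀ j, X j), Sterm i x = sbar x + s i x)
    (J : Fin N → (∀ i, Fin T → V i) → ℝ)
    (hJ : ∀ (i : Fin N) (Uc : ∀ j, Fin T → V j),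
      J i Uc = Sterm i (fun j => φ j (Uc j) (Fin.last T))
        + ∑ k : Fin T,
            L i (fun j => φ j (Uc j) k.castSucc) (fun j => Uc j k))
    (P : (∀ i, Fin T → V i) → ℝ)
    (hP : ∀ Uc : ∀ j, Fin T → V j,
      P Uc = (∑ k : Fin T,
            p (fun j => φ j (Uc j) k.castSucc) (fun j => Uc j k))
        + sbar (fun j => φ j (Uc j) (Fin.last T)))
    (Sfeas : ∀ i, Set (Fin T → V i))
    (Ustar : ∀ i, Fin T → V i)
    (hfeas : ∀ i, Ustar i ∈ Sfeas i)
    (hmin : ∀ Uc : ∀ i, Fin T → V i, (∀ i, Uc i ∈ Sfeas i) → P Ustar ≤ P Uc) :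
    ∀ (i : Fin N), ∀ ui ∈ Sfeas i,
      J i Ustar ≤ J i (Function.update Ustar i ui) := by
  intro i ui hui
  set U' := Function.update Ustar i ui with hU'
  have hfeas' : ∀ j, U' j ∈ Sfeas j := by
    intro j
    by_cases hj : j = i
    · subst hj; simpa [hU'] using hui
    · simpa [hU', Function.update_of_ne hj] using hfeas j
  have hUj : ∀ j, j ≠ i → U' j = Ustar j := fun j hj => Function.update_of_ne hj _ _
  have hPle : P Ustar ≤ P U' := hmin U' hfeas'
  have hceq : ∀ k : Fin T,
      c i (fun j => φ j (Ustar j) k.castSucc) (fun j => Ustar j k)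
        = c i (fun j => φ j (U' j) k.castSucc) (fun j => U' j k) := by
    intro k
    exact hc i _ _ _ _ (fun j hj => by rw [hUj j hj]) (fun j hj => by rw [hUj j hj])
  have hseq : s i (fun j => φ j (Ustar j) (Fin.last T))
      = s i (fun j => φ j (U' j) (Fin.last T)) :=
    hs i _ _ (fun j hj => by rw [hUj j hj])
  have key : ∀ Uc : ∀ j, Fin T → V j,
      J i Uc = P Uc + s i (fun j => φ j (Uc j) (Fin.last T))
        + ∑ k : Fin T, c i (fun j => φ j (Uc j) k.castSucc) (fun j => Uc j k) := by
    intro Uc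
    rw [hJ, hP, hS]
    simp only [hL]
    rw [Finset.sum_add_distrib]
    ring
  rw [key, key, ← hseq, ← Finset.sum_congr rfl (fun k _ => (hceq k))]
  linarith
end
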